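/- There exist constants C > 0 and d₀ such that for all d ≥ d₀, all positive integers m ≤ d², and every fixed unit vector u ∈ ℝ^d the following holds: if v⁽¹⁾, …, v⁽ᵐ⁾ are i.i.d. uniformly random points on the unit sphere S^{d−1} ⊆ ℝ^d, then Pr( #{ i : (u·v⁽ⁱ⁾)² > d^{−1/4} } > C·d^{1/4} ) ≤ 2^{−d}. -/

import Mathlib

open MeasureTheory Metric ProbabilityTheory

/-- The uniform (rotation-invariant) probability distribution on the unit sphere of `ℝ^d`,
viewed as a measure on the ambient space. -/
noncomputable def uniformSphere (d : ℕ) : Measure (EuclideanSpace ℝ (Fin d)) :=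
  ((volume : Measure (EuclideanSpace ℝ (Fin d))).toSphere Set.univ)⁻¹ •
    Measure.map Subtype.val ((volume : Measure (EuclideanSpace ℝ (Fin d))).toSphere)

open Set Real
open scoped Pointwise ENNReal RealInnerProductSpace

/-!
The uniform measure of a subset of the sphere is the relative volume of the cone `(0,1)·A` over
it. The cone over the double cap `{v : (u·v)² > t}` lies in the two balls of radius `√(1 - t)`
centred at `±√t u`, so the double cap has measure at most `2 (1 - t)^{d/2} ≤ 2 e^{-td/2}`.
A union bound over the `k`-subsets of the `m ≤ d²` samples bounds the probability that `k` of
them fall in the double cap by `(2 m e^{-td/2})^k`; for `t = d^{-1/4}` and `k ≈ 4 d^{1/4}` this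
is at most `e^{-d}`.
-/

section Cone

variable {E : Type*} [NormedAddCommGroup E] [InnerProductSpace ℝ E]

lemma dist_smul_lt_sqrt_one_sub {u v : E} (hu : ‖u‖ = 1) (hv : ‖v‖ = 1) {t r : ℝ}
    (ht0 : 0 ≤ t) (ht : t ≤ 1 / 2) (hr : r ∈ Ioo 0 1) (h : √t < ⟪u, v⟫) :
    dist (r • v) (√t • u) < √(1 - t) := by
  obtain ⟨hr0, hr1⟩ := hr
  have hst : √t * √t = t := mul_self_sqrt ht0
  have hsv : t ≤ √t * ⟪u, v⟫ :=
    calc t = √t * √t := hst.symm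
      _ ≤ √t * ⟪u, v⟫ := mul_le_mul_of_nonneg_left h.le (sqrt_nonneg t)
  rw [dist_eq_norm, ← sq_lt_sq₀ (norm_nonneg _) (sqrt_nonneg _), sq_sqrt (by linarith),
    norm_sub_sq_real, norm_smul, norm_smul, inner_smul_left, inner_smul_right, real_inner_comm,
    hu, hv, norm_of_nonneg hr0.le, norm_of_nonneg (sqrt_nonneg t)]
  simp only [conj_trivial]
  nlinarith

lemma Ioo_smul_cap_subset {u : E} (hu : ‖u‖ = 1) {t : ℝ} (ht0 : 0 ≤ t) (ht : t ≤ 1 / 2) :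
    Ioo (0 : ℝ) 1 • (sphere (0 : E) 1 ∩ {x | t < ⟪u, x⟫ ^ 2}) ⊆
      ball (√t • u) √(1 - t) ∪ ball (-(√t • u)) √(1 - t) := by
  rintro _ ⟨r, hr, v, ⟨hv, hvt⟩, rfl⟩
  rw [mem_sphere_zero_iff_norm] at hv
  have habs : √t < |⟪u, v⟫| := by
    simpa [sqrt_sq_eq_abs] using sqrt_lt_sqrt ht0 hvt
  rcases lt_abs.mp habs with h | h
  · exact Or.inl (dist_smul_lt_sqrt_one_sub hu hv ht0 ht hr h)
  · refine Or.inr ?_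
    rw [mem_ball, ← smul_neg]
    exact dist_smul_lt_sqrt_one_sub (by rwa [norm_neg]) hv ht0 ht hr (by rwa [inner_neg_left])

end Cone

lemma measure_pi_le_choose_mul_pow {ι X : Type*} [Fintype ι] [MeasurableSpace X]
    (μ : Measure X) [IsProbabilityMeasure μ] (p : X → Prop) [DecidablePred p] (k : ℕ) :
    Measure.pi (fun _ : ι => μ) {v | k ≤ (Finset.univ.filter fun i => p (v i)).card} ≤
      (Fintype.card ι).choose k * μ {x | p x} ^ k := by
  classical
  let cylinder (S : Finset ι) : Set (ι → X) :=
    univ.pi fun i => if i ∈ S then {x | p x} else univ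
  have hcover : {v : ι → X | k ≤ (Finset.univ.filter fun i => p (v i)).card} ⊆
      ⋃ S ∈ Finset.univ.powersetCard k, cylinder S := by
    intro v hv
    obtain ⟨S, hS, hcard⟩ := Finset.exists_subset_card_eq hv
    refine mem_iUnion₂.mpr ⟨S, Finset.mem_powersetCard.mpr ⟨S.subset_univ, hcard⟩, ?_⟩
    intro i _
    by_cases hi : i ∈ S
    · simpa [hi] using (Finset.mem_filter.mp (hS hi)).2
    · simp [hi]
  have hcylinder : ∀ S ∈ Finset.univ.powersetCard k,
      Measure.pi (fun _ : ι => μ) (cylinder S) = μ {x | p x} ^ k := by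
    intro S hS
    simp only [cylinder, Measure.pi_pi, apply_ite μ, measure_univ]
    rw [Finset.prod_ite_mem, Finset.univ_inter, Finset.prod_const,
      (Finset.mem_powersetCard.mp hS).2]
  calc _ ≤ _ := measure_mono hcover
    _ ≤ ∑ S ∈ Finset.univ.powersetCard k, Measure.pi (fun _ : ι => μ) (cylinder S) :=
        measure_biUnion_finset_le _ _
    _ = _ := by
        rw [Finset.sum_congr rfl hcylinder, Finset.sum_const, Finset.card_powersetCard,
          Finset.card_univ, nsmul_eq_mul]

section UniformSphere

variable {d : ℕ}

lemma isProbabilityMeasure_uniformSphere (hd : d ≠ 0) :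
    IsProbabilityMeasure (uniformSphere d) := by
  have hpos : (volume : Measure (EuclideanSpace ℝ (Fin d))).toSphere univ ≠ 0 := by
    rw [Measure.toSphere_apply_univ, finrank_euclideanSpace_fin]
    exact mul_ne_zero (by exact_mod_cast hd) (measure_ball_pos _ _ one_pos).ne'
  constructor
  rw [uniformSphere, Measure.smul_apply, Measure.map_apply measurable_subtype_coe .univ,
    preimage_univ, smul_eq_mul, ENNReal.inv_mul_cancel hpos (measure_ne_top _ _)]

lemma uniformSphere_apply (hd : d ≠ 0) {A : Set (EuclideanSpace ℝ (Fin d))}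
    (hA : MeasurableSet A) :
    uniformSphere d A =
      volume (Ioo (0 : ℝ) 1 • (sphere 0 1 ∩ A)) /
        volume (ball (0 : EuclideanSpace ℝ (Fin d)) 1) := by
  rw [uniformSphere, Measure.smul_apply, Measure.map_apply measurable_subtype_coe hA,
    Measure.toSphere_apply' _ (measurable_subtype_coe hA), Measure.toSphere_apply_univ,
    Subtype.image_preimage_coe, finrank_euclideanSpace_fin, smul_eq_mul,
    ← ENNReal.div_eq_inv_mul, ENNReal.mul_div_mul_left _ _ (by exact_mod_cast hd)
      (ENNReal.natCast_ne_top d)]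

lemma uniformSphere_cap_le (hd : d ≠ 0) {u : EuclideanSpace ℝ (Fin d)} (hu : ‖u‖ = 1)
    {t : ℝ} (ht0 : 0 ≤ t) (ht : t ≤ 1 / 2) :
    uniformSphere d {x | t < ⟪u, x⟫ ^ 2} ≤ 2 * ENNReal.ofReal (√(1 - t) ^ d) := by
  have : Nonempty (Fin d) := ⟨⟨0, Nat.pos_of_ne_zero hd⟩⟩
  rw [uniformSphere_apply hd (measurableSet_lt measurable_const (by fun_prop))]
  refine ENNReal.div_le_of_le_mul ?_
  calc _ ≤ volume (ball (√t • u) √(1 - t) ∪ ball (-(√t • u)) √(1 - t)) :=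
        measure_mono (Ioo_smul_cap_subset hu ht0 ht)
    _ ≤ volume (ball (√t • u) √(1 - t)) + volume (ball (-(√t • u)) √(1 - t)) :=
        measure_union_le _ _
    _ = _ := by
        rw [Measure.addHaar_ball _ _ (sqrt_nonneg _), Measure.addHaar_ball _ _ (sqrt_nonneg _),
          finrank_euclideanSpace_fin]
        ring

lemma uniformSphere_pi_many_in_cap_le (hd : d ≠ 0) (m n : ℕ) {u : EuclideanSpace ℝ (Fin d)}
    (hu : ‖u‖ = 1) {t : ℝ} (ht0 : 0 ≤ t) (ht : t ≤ 1 / 2) :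
    Measure.pi (fun _ : Fin m => uniformSphere d)
        {v | n ≤ (Finset.univ.filter fun i => t < ⟪u, v i⟫ ^ 2).card} ≤
      ENNReal.ofReal ((m * (2 * √(1 - t) ^ d)) ^ n) := by
  have := isProbabilityMeasure_uniformSphere hd
  calc _ ≤ m.choose n * uniformSphere d {x | t < ⟪u, x⟫ ^ 2} ^ n := by
        simpa using measure_pi_le_choose_mul_pow (ι := Fin m) (uniformSphere d) _ n
    _ ≤ (m : ℝ≥0∞) ^ n * (2 * ENNReal.ofReal (√(1 - t) ^ d)) ^ n := by
        gcongr
        · exact_mod_cast Nat.choose_le_pow m n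
        · exact uniformSphere_cap_le hd hu ht0 ht
    _ = _ := by
        rw [mul_pow (m : ℝ), ENNReal.ofReal_mul (by positivity),
          ENNReal.ofReal_pow (p := m) (by positivity) n, ENNReal.ofReal_natCast,
          ENNReal.ofReal_pow (p := 2 * _) (by positivity) n, ENNReal.ofReal_mul (by norm_num),
          ENNReal.ofReal_ofNat]

end UniformSphere

lemma sqrt_one_sub_pow_le_exp (t : ℝ) (n : ℕ) :
    √(1 - t) ^ n ≤ exp (-(t * n / 2)) := by
  have h : √(1 - t) ≤ exp (-t / 2) := by
    rw [exp_half]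
    exact sqrt_le_sqrt (by linarith [add_one_le_exp (-t)])
  calc √(1 - t) ^ n ≤ exp (-t / 2) ^ n := pow_le_pow_left₀ (sqrt_nonneg _) h n
    _ = _ := by rw [← exp_nat_mul]; ring_nf

lemma two_mul_pow_eight_le_exp {q : ℝ} (hq : 8 ≤ q) : 2 * q ^ 8 ≤ exp (q ^ 3 / 4) := by
  have h2 : (2 : ℝ) ≤ exp 1 := by linarith [add_one_le_exp 1]
  have hq' : q ≤ exp (q - 1) := by linarith [add_one_le_exp (q - 1)]
  have hq64 : 64 ≤ q ^ 2 := by nlinarith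
  calc 2 * q ^ 8 ≤ exp 1 * exp (q - 1) ^ 8 := by gcongr
    _ = exp (8 * q - 7) := by rw [← exp_nat_mul, ← exp_add]; ring_nf
    _ ≤ exp (q ^ 3 / 4) :=
        exp_le_exp.mpr (by nlinarith [mul_le_mul_of_nonneg_left hq64 (by linarith : (0 : ℝ) ≤ q)])

lemma pow_eight_mul_cap_bound_pow_le_exp {q : ℝ} (hq : 8 ≤ q) {d n : ℕ} (hd : q ^ 4 = d)
    (hn : 4 * q ≤ n) : (q ^ 8 * (2 * √(1 - q⁻¹) ^ d)) ^ n ≤ exp (-d) := by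
  have hq0 : 0 < q := by linarith
  have hbase : q ^ 8 * (2 * √(1 - q⁻¹) ^ d) ≤ exp (-(q ^ 3 / 4)) :=
    calc q ^ 8 * (2 * √(1 - q⁻¹) ^ d) ≤ q ^ 8 * (2 * exp (-(q⁻¹ * d / 2))) := by
          gcongr
          exact sqrt_one_sub_pow_le_exp q⁻¹ d
      _ = 2 * q ^ 8 * exp (-(q ^ 3 / 2)) := by
          rw [← hd]; field_simp
      _ ≤ exp (q ^ 3 / 4) * exp (-(q ^ 3 / 2)) := by gcongr; exact two_mul_pow_eight_le_exp hq
      _ = exp (-(q ^ 3 / 4)) := by rw [← exp_add]; ring_nf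
  calc _ ≤ exp (-(q ^ 3 / 4)) ^ n := pow_le_pow_left₀ (by positivity) hbase n
    _ = exp (-(n * q ^ 3 / 4)) := by rw [← exp_nat_mul]; ring_nf
    _ ≤ exp (-d) := exp_le_exp.mpr (by rw [← hd]; nlinarith [pow_pos hq0 3])

lemma exp_neg_le_two_rpow_neg {x : ℝ} (hx : 0 ≤ x) : exp (-x) ≤ (2 : ℝ) ^ (-x) := by
  rw [rpow_def_of_pos two_pos]
  exact exp_le_exp.mpr (by nlinarith [log_two_lt_d9])

/-- There are `C > 0` and `d₀` such that for all `d ≥ d₀`, all positive `m ≤ d²`, and every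
unit vector `u`: if `v⁽¹⁾,…,v⁽ᵐ⁾` are i.i.d. uniform on the sphere, then
`Pr(#{i : (u·v⁽ⁱ⁾)² > d^{−1/4}} > C·d^{1/4}) ≤ 2^{−d}`. -/
theorem few_heavy_coordinates :
    ∃ C : ℝ, 0 < C ∧ ∃ d₀ : ℕ, ∀ d : ℕ, d₀ ≤ d → ∀ m : ℕ, 1 ≤ m → m ≤ d ^ 2 →
      ∀ u : EuclideanSpace ℝ (Fin d), ‖u‖ = 1 →
        (Measure.pi fun _ : Fin m => uniformSphere d)
            {v : Fin m → EuclideanSpace ℝ (Fin d) |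
              C * (d : ℝ) ^ ((1 : ℝ) / 4) <
                ((Finset.univ.filter fun i : Fin m =>
                  (d : ℝ) ^ (-(1 : ℝ) / 4) < (∑ k, u k * v i k) ^ 2).card : ℝ)} ≤
          ENNReal.ofReal ((2 : ℝ) ^ (-(d : ℝ))) := by
  refine ⟨4, by norm_num, 4096, fun d hd m _ hm u hu => ?_⟩
  set q : ℝ := (d : ℝ) ^ ((1 : ℝ) / 4)
  have hqd : q ^ 4 = d := by
    simpa [q] using rpow_inv_natCast_pow (Nat.cast_nonneg d) (n := 4) (by norm_num)
  have hq8 : 8 ≤ q :=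
    (pow_le_pow_iff_left₀ (by norm_num) (by positivity) four_ne_zero).mp
      (by rw [hqd]; exact_mod_cast hd)
  have ht : (d : ℝ) ^ (-(1 : ℝ) / 4) = q⁻¹ := by rw [neg_div, rpow_neg (Nat.cast_nonneg d)]
  have hinner (x : EuclideanSpace ℝ (Fin d)) : ∑ k, u k * x k = ⟪u, x⟫ := by
    simp [PiLp.inner_apply, mul_comm]
  have hm' : (m : ℝ) ≤ q ^ 8 := by rw [show q ^ 8 = (q ^ 4) ^ 2 by ring, hqd]; exact_mod_cast hm
  set n := ⌊4 * q⌋₊ + 1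
  have hn : 4 * q ≤ n := by push_cast [n]; linarith [Nat.lt_floor_add_one (4 * q)]
  calc _ ≤ _ := measure_mono fun v hv => by
        simp only [mem_ofPred_eq, ht, hinner] at hv ⊢
        exact Nat.floor_lt (by positivity) |>.mpr hv
    _ ≤ _ := uniformSphere_pi_many_in_cap_le (by omega) m n hu (by positivity)
        (by rw [inv_le_comm₀] <;> linarith)
    _ ≤ ENNReal.ofReal ((q ^ 8 * (2 * √(1 - q⁻¹) ^ d)) ^ n) := by gcongr
    _ ≤ _ := ENNReal.ofReal_le_ofReal <| (pow_eight_mul_cap_bound_pow_le_exp hq8 hqd hn).trans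
        (exp_neg_le_two_rpow_neg (by positivity))
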